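/- arXiv:1712.07823 — 7 statements merged into one kernel-verified Lean document; each statement's English description precedes it below -/
import Mathlib

section
/- Let a, b be integers and u the sequence with u(0)=1, u(1)=a, u(n)=a·u(n-1)+b·u(n-2). Define β(q) = b·(b²·u(q-5)² - a·u(q-5)·u(q-2) + 2b·u(q-4)² + a·u(q-4)·u(q-3) + u(q-3)²) for q ≥ 5. Then β(q+3) = (a²+b)·β(q+2) + b·(a²+b)·β(q+1) - b³·β(q) for all q ≥ 5. -/
/-!
If `u` satisfies `u (n + 2) = a * u (n + 1) + b * u n`, with characteristic roots `r, s`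
(`r + s = a`, `r * s = -b`), then any quadratic form in `(u n, u (n + 1))` is a combination of
`(r ^ 2) ^ n`, `(r * s) ^ n` and `(s ^ 2) ^ n`. It therefore satisfies the recurrence with
characteristic polynomial `(X - r ^ 2) (X - r s) (X - s ^ 2)
  = X ^ 3 - (a ^ 2 + b) X ^ 2 - b (a ^ 2 + b) X + b ^ 3`.
After eliminating `u (q - 3)` and `u (q - 2)`, `β q` is such a quadratic form in
`(u (q - 5), u (q - 4))`.
-/

theorem quadForm_recurrence {R : Type*} [CommRing R] {a b : R} {u : ℕ → R}
    (hu : ∀ n, u (n + 2) = a * u (n + 1) + b * u n) (c₀ c₁ c₂ : R) {w : ℕ → R}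
    (hw : ∀ n, w n = c₀ * u n ^ 2 + c₁ * u n * u (n + 1) + c₂ * u (n + 1) ^ 2) (n : ℕ) :
    w (n + 3) = (a ^ 2 + b) * w (n + 2) + b * (a ^ 2 + b) * w (n + 1) - b ^ 3 * w n := by
  have h2 : u (n + 2) = a * u (n + 1) + b * u n := hu n
  have h3 : u (n + 3) = a * u (n + 2) + b * u (n + 1) := hu (n + 1)
  have h4 : u (n + 4) = a * u (n + 3) + b * u (n + 2) := hu (n + 2)
  simp only [hw, h4, h3, h2]
  ring

theorem stmt2_general (a b : ℤ) (u : ℕ → ℤ)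
    (hu : ∀ n, u (n + 2) = a * u (n + 1) + b * u n)
    (β : ℕ → ℤ)
    (hβ : ∀ q ≥ 5, β q = b * (b ^ 2 * (u (q - 5)) ^ 2 - a * u (q - 5) * u (q - 2)
      + 2 * b * (u (q - 4)) ^ 2 + a * u (q - 4) * u (q - 3) + (u (q - 3)) ^ 2)) :
    ∀ q ≥ 5, β (q + 3) = (a ^ 2 + b) * β (q + 2) + b * (a ^ 2 + b) * β (q + 1) - b ^ 3 * β q := by
  have hβ_quadForm : ∀ k, β (k + 5) = b ^ 2 * (2 * b - a ^ 2) * u k ^ 2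
      + a * b * (2 * b - a ^ 2) * u k * u (k + 1) + 2 * b * (a ^ 2 + b) * u (k + 1) ^ 2 := by
    intro k
    have h2 : u (k + 2) = a * u (k + 1) + b * u k := hu k
    have h3 : u (k + 3) = a * u (k + 2) + b * u (k + 1) := hu (k + 1)
    rw [hβ (k + 5) (by omega), show k + 5 - 5 = k by omega, show k + 5 - 4 = k + 1 by omega,
      show k + 5 - 3 = k + 2 by omega, show k + 5 - 2 = k + 3 by omega, h3, h2]
    ring
  intro q hq
  obtain ⟨k, rfl⟩ := Nat.exists_eq_add_of_le' hq
  simpa only [Nat.add_right_comm k _ 5] using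
    quadForm_recurrence hu _ _ _ (w := fun n ↦ β (n + 5)) hβ_quadForm k

theorem stmt2 (a b : ℤ) (u : ℕ → ℤ) (hu0 : u 0 = 1) (hu1 : u 1 = a)
    (hu : ∀ n, u (n + 2) = a * u (n + 1) + b * u n)
    (β : ℕ → ℤ)
    (hβ : ∀ q ≥ 5, β q = b * (b ^ 2 * (u (q - 5)) ^ 2 - a * u (q - 5) * u (q - 2)
      + 2 * b * (u (q - 4)) ^ 2 + a * u (q - 4) * u (q - 3) + (u (q - 3)) ^ 2)) :
    ∀ q ≥ 5, β (q + 3) = (a ^ 2 + b) * β (q + 2) + b * (a ^ 2 + b) * β (q + 1) - b ^ 3 * β q :=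
  stmt2_general a b u hu β hβ
end

section
/- Let a, b be integers and u the sequence with u(0)=1, u(1)=a, u(n)=a·u(n-1)+b·u(n-2). Define γ(q) = -b²·(b·u(q-5)²·u(q-2) - 2·u(q-4)·u(q-3)² + a·u(q-5)·u(q-3)² + u(q-4)²·u(q-2)) for q ≥ 5. Then γ(q+2) = -a·b·γ(q+1) + b³·γ(q) for all q ≥ 5. -/
/-! The characteristic roots of `x² - a x - b` are `r, s` with `r + s = a`, `r s = -b`; those of the
`γ`-recurrence are `r² s` and `r s²`. So the claim says that the cubic form defining `γ` has no
`r³ᵐ` or `s³ᵐ` component. Concretely, it is a polynomial identity in two consecutive terms of `u`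
once the later terms are expanded by the recurrence. -/

/-- `γ (m + 5)`, indexed so that no truncated subtraction occurs. -/
def tilingGamma {R : Type*} [CommRing R] (a b : R) (u : ℕ → R) (m : ℕ) : R :=
  -b ^ 2 * (b * u m ^ 2 * u (m + 3) - 2 * u (m + 1) * u (m + 2) ^ 2
    + a * u m * u (m + 2) ^ 2 + u (m + 1) ^ 2 * u (m + 3))

theorem tilingGamma_add_two {R : Type*} [CommRing R] (a b : R) (u : ℕ → R)
    (hu : ∀ n, u (n + 2) = a * u (n + 1) + b * u n) (m : ℕ) :
    tilingGamma a b u (m + 2) = -(a * b) * tilingGamma a b u (m + 1) + b ^ 3 * tilingGamma a b u m := by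
  have h2 := hu m
  have h3 := hu (m + 1)
  have h4 := hu (m + 2)
  have h5 := hu (m + 3)
  simp only [tilingGamma, add_assoc, Nat.reduceAdd] at *
  rw [h5, h4, h3, h2]
  ring

theorem stmt3_general (a b : ℤ) (u : ℕ → ℤ)
    (hu : ∀ n, u (n + 2) = a * u (n + 1) + b * u n)
    (γ : ℕ → ℤ)
    (hγ : ∀ q ≥ 5, γ q = -b ^ 2 * (b * (u (q - 5)) ^ 2 * u (q - 2)
      - 2 * u (q - 4) * (u (q - 3)) ^ 2 + a * u (q - 5) * (u (q - 3)) ^ 2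
      + (u (q - 4)) ^ 2 * u (q - 2))) :
    ∀ q ≥ 5, γ (q + 2) = -(a * b) * γ (q + 1) + b ^ 3 * γ q := by
  have hγ' : ∀ m, γ (m + 5) = tilingGamma a b u m := fun m => by
    rw [hγ (m + 5) (by omega), tilingGamma]
    simp only [Nat.add_sub_cancel, show m + 5 - 4 = m + 1 by omega,
      show m + 5 - 3 = m + 2 by omega, show m + 5 - 2 = m + 3 by omega]
  intro q hq
  obtain ⟨m, rfl⟩ := Nat.exists_eq_add_of_le' hq
  rw [show m + 5 + 2 = m + 2 + 5 by omega, show m + 5 + 1 = m + 1 + 5 by omega, hγ', hγ', hγ']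
  exact tilingGamma_add_two a b u hu m

theorem stmt3 (a b : ℤ) (u : ℕ → ℤ) (hu0 : u 0 = 1) (hu1 : u 1 = a)
    (hu : ∀ n, u (n + 2) = a * u (n + 1) + b * u n)
    (γ : ℕ → ℤ)
    (hγ : ∀ q ≥ 5, γ q = -b ^ 2 * (b * (u (q - 5)) ^ 2 * u (q - 2)
      - 2 * u (q - 4) * (u (q - 3)) ^ 2 + a * u (q - 5) * (u (q - 3)) ^ 2
      + (u (q - 4)) ^ 2 * u (q - 2))) :
    ∀ q ≥ 5, γ (q + 2) = -(a * b) * γ (q + 1) + b ^ 3 * γ q :=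
  stmt3_general a b u hu γ hγ
end

section
/- Let R and R̃ be defined by the breakable and unbreakable tiling systems on the mosaic {4,q}. Then for all n ≥ 1, R(n) = Σ_{i=0}^{n-1} R(i)·R̃(n-i). -/
/-!
Record the state `(R, A, B, C)(n)` as a vector `V n`. One step of the breakable system is
`V (n + 1) = K (V n) + R n • c`, where `K` is the part of the transfer matrix that ignores the
`R`-coordinate and `c` is its `R`-column; the unbreakable system is `W 1 = c`, `W (n + 1) = K (W n)`.
Splitting a tiling at its last break gives `V n = ∑_{i < n} R i • W (n - i)`, which follows by
induction on `n` from linearity of `K`; the theorem is its `R`-coordinate.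
-/

open Finset

theorem eq_sum_smul_of_eq_map_add_smul {S M : Type*} [Semiring S] [AddCommMonoid M] [Module S M]
    (K : M →ₗ[S] M) (c : M) (r : ℕ → S) {V W : ℕ → M}
    (hV0 : K (V 0) = 0) (hV : ∀ n, V (n + 1) = K (V n) + r n • c)
    (hW1 : W 1 = c) (hW : ∀ n ≥ 1, W (n + 1) = K (W n)) :
    ∀ n ≥ 1, V n = ∑ i ∈ range n, r i • W (n - i) := by
  intro n hn
  induction n, hn using Nat.le_induction with
  | base => simp [hV, hV0, hW1]
  | succ n hn ih =>
    have hshift : ∀ i ∈ range n, K (r i • W (n - i)) = r i • W (n + 1 - i) := fun i hi => by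
      rw [map_smul, Nat.sub_add_comm (mem_range.mp hi).le, hW _ (by simp at hi; omega)]
    rw [hV, ih, map_sum, sum_congr rfl hshift, sum_range_succ, Nat.add_sub_cancel_left, hW1]

def unbrokenStep (a b : ℤ) (q : ℕ) (u : ℕ → ℤ) : Matrix (Fin 4) (Fin 4) ℤ :=
  !![0, a * b * u (q - 4), b * u (q - 3), b ^ 2 * u (q - 4);
     0, a * b * u (q - 5), b * u (q - 4), b ^ 2 * u (q - 5);
     0, b * u (q - 4), 0, 0;
     0, b * u (q - 5), 0, 0]

theorem stmt13_general (a b : ℤ) (q : ℕ) (u : ℕ → ℤ)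
    (R A B C : ℕ → ℤ)
    (hA0 : A 0 = 0) (hB0 : B 0 = 0) (hC0 : C 0 = 0)
    (hR : ∀ n, R (n + 1) = u (q - 2) * R n + a * b * u (q - 4) * A n
      + b * u (q - 3) * B n + b ^ 2 * u (q - 4) * C n)
    (hA : ∀ n, A (n + 1) = u (q - 3) * R n + a * b * u (q - 5) * A n
      + b * u (q - 4) * B n + b ^ 2 * u (q - 5) * C n)
    (hB : ∀ n, B (n + 1) = u (q - 3) * R n + b * u (q - 4) * A n)
    (hC : ∀ n, C (n + 1) = u (q - 4) * R n + b * u (q - 5) * A n)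
    (R' A' B' C' : ℕ → ℤ)
    (hR1' : R' 1 = u (q - 2)) (hA1' : A' 1 = u (q - 3)) (hB1' : B' 1 = u (q - 3))
    (hC1' : C' 1 = u (q - 4))
    (hR' : ∀ n ≥ 2, R' n = a * b * u (q - 4) * A' (n - 1)
      + b * u (q - 3) * B' (n - 1) + b ^ 2 * u (q - 4) * C' (n - 1))
    (hA' : ∀ n ≥ 2, A' n = a * b * u (q - 5) * A' (n - 1)
      + b * u (q - 4) * B' (n - 1) + b ^ 2 * u (q - 5) * C' (n - 1))
    (hB' : ∀ n ≥ 2, B' n = b * u (q - 4) * A' (n - 1))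
    (hC' : ∀ n ≥ 2, C' n = b * u (q - 5) * A' (n - 1)) :
    ∀ n ≥ 1, R n = ∑ i ∈ Finset.range n, R i * R' (n - i) := by
  intro n hn
  have hdecomp := eq_sum_smul_of_eq_map_add_smul (unbrokenStep a b q u).mulVecLin
    ![u (q - 2), u (q - 3), u (q - 3), u (q - 4)] R
    (V := fun n => ![R n, A n, B n, C n]) (W := fun n => ![R' n, A' n, B' n, C' n])
    (hV0 := by funext i; fin_cases i <;> simp [unbrokenStep, hA0, hB0, hC0])
    (hV := fun m => by funext i; fin_cases i <;> simp [unbrokenStep, hR, hA, hB, hC] <;> ring)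
    (hW1 := by simp [hR1', hA1', hB1', hC1'])
    (hW := fun m hm => by
      funext i
      fin_cases i <;> simp [unbrokenStep, hR' (m + 1) (by omega), hA' (m + 1) (by omega),
        hB' (m + 1) (by omega), hC' (m + 1) (by omega)] <;> ring)
    n hn
  simpa using congrFun hdecomp 0

theorem stmt13 (a b : ℤ) (q : ℕ) (hq : q ≥ 5) (u : ℕ → ℤ)
    (hu0 : u 0 = 1) (hu1 : u 1 = a)
    (hu : ∀ n, u (n + 2) = a * u (n + 1) + b * u n)
    (R A B C : ℕ → ℤ)
    (hR0 : R 0 = 1) (hA0 : A 0 = 0) (hB0 : B 0 = 0) (hC0 : C 0 = 0)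
    (hR : ∀ n, R (n + 1) = u (q - 2) * R n + a * b * u (q - 4) * A n
      + b * u (q - 3) * B n + b ^ 2 * u (q - 4) * C n)
    (hA : ∀ n, A (n + 1) = u (q - 3) * R n + a * b * u (q - 5) * A n
      + b * u (q - 4) * B n + b ^ 2 * u (q - 5) * C n)
    (hB : ∀ n, B (n + 1) = u (q - 3) * R n + b * u (q - 4) * A n)
    (hC : ∀ n, C (n + 1) = u (q - 4) * R n + b * u (q - 5) * A n)
    (R' A' B' C' : ℕ → ℤ)
    (hR1' : R' 1 = u (q - 2)) (hA1' : A' 1 = u (q - 3)) (hB1' : B' 1 = u (q - 3))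
    (hC1' : C' 1 = u (q - 4))
    (hR' : ∀ n ≥ 2, R' n = a * b * u (q - 4) * A' (n - 1)
      + b * u (q - 3) * B' (n - 1) + b ^ 2 * u (q - 4) * C' (n - 1))
    (hA' : ∀ n ≥ 2, A' n = a * b * u (q - 5) * A' (n - 1)
      + b * u (q - 4) * B' (n - 1) + b ^ 2 * u (q - 5) * C' (n - 1))
    (hB' : ∀ n ≥ 2, B' n = b * u (q - 4) * A' (n - 1))
    (hC' : ∀ n ≥ 2, C' n = b * u (q - 5) * A' (n - 1)) :
    ∀ n ≥ 1, R n = ∑ i ∈ Finset.range n, R i * R' (n - i) :=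
  stmt13_general a b q u R A B C hA0 hB0 hC0 hR hA hB hC R' A' B' C' hR1' hA1' hB1' hC1' hR' hA' hB'
    hC'
end

section
/- Let R and R̃ be any pair of sequences with R(0)=1 satisfying the convolution identity R(n) = Σ_{i=1}^{n} R(n-i)·R̃(i) for all n ≥ 1. Then for all m, n ≥ 1, R(n+m) = R(n)·R(m) + Σ_{i=1}^{n} Σ_{j=1}^{m} R(n-i)·R(m-j)·R̃(i+j). -/
/-!
Split the sum `R (n + m) = ∑ₖ R (n + m - k) R̃ k` at `k = n`. The terms with `k ≤ n` are handled by
induction on `n`; the terms with `k > n` are the tilings whose first unbreakable block crosses the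
cut at `n`. What remains is the fact that convolving any sequence `G` with `R` again satisfies the
defining recursion of `R`, with `G n` as inhomogeneous term.
-/

open Finset

section Sums

variable {M : Type*} [AddCommMonoid M]

lemma sum_Icc_one_add (f : ℕ → M) (n m : ℕ) :
    ∑ k ∈ Icc 1 (n + m), f k = ∑ k ∈ Icc 1 n, f k + ∑ j ∈ Icc 1 m, f (n + j) := by
  induction m with
  | zero => simp
  | succ m ih =>
    rw [← add_assoc, sum_Icc_succ_top (by omega), ih, sum_Icc_succ_top (by omega), add_assoc, add_assoc]

lemma sum_Icc_one_sum_Icc_one_sub_comm (n : ℕ) (f : ℕ → ℕ → M) :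
    ∑ i ∈ Icc 1 n, ∑ k ∈ Icc 1 (n + 1 - i), f i k
      = ∑ k ∈ Icc 1 (n + 1), ∑ i ∈ Icc 1 (n + 1 - k), f i k :=
  sum_comm' fun i k => by simp only [mem_Icc]; omega

end Sums

section Renewal

variable {R R' : ℕ → ℤ} (hR0 : R 0 = 1)
  (hconv : ∀ n ≥ 1, R n = ∑ i ∈ Icc 1 n, R (n - i) * R' i)
include hR0 hconv

lemma sum_Icc_conv_renewal (G : ℕ → ℤ) {n : ℕ} (hn : 1 ≤ n) :
    ∑ i ∈ Icc 1 n, R (n - i) * G i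
      = ∑ k ∈ Icc 1 n, (∑ i ∈ Icc 1 (n - k), R (n - k - i) * G i) * R' k + G n := by
  obtain ⟨n, rfl⟩ := Nat.exists_eq_add_of_le' hn
  rw [sum_Icc_succ_top (by omega), Nat.sub_self, hR0, one_mul]
  congr 1
  calc ∑ i ∈ Icc 1 n, R (n + 1 - i) * G i
      = ∑ i ∈ Icc 1 n, ∑ k ∈ Icc 1 (n + 1 - i), R (n + 1 - i - k) * R' k * G i :=
        sum_congr rfl fun i hi => by
          rw [hconv _ (by simp only [mem_Icc] at hi; omega), sum_mul]
    _ = ∑ k ∈ Icc 1 (n + 1), ∑ i ∈ Icc 1 (n + 1 - k), R (n + 1 - i - k) * R' k * G i :=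
        sum_Icc_one_sum_Icc_one_sub_comm n _
    _ = _ := sum_congr rfl fun k _ => by
        rw [sum_mul]
        refine sum_congr rfl fun i _ => ?_
        rw [Nat.sub_right_comm]
        ring

lemma apply_add_eq_mul_add_sum (m n : ℕ) :
    R (n + m) = R n * R m
      + ∑ i ∈ Icc 1 n, R (n - i) * ∑ j ∈ Icc 1 m, R (m - j) * R' (i + j) := by
  induction n using Nat.strong_induction_on with
  | _ n ih =>
    rcases Nat.eq_zero_or_pos n with rfl | hn
    · simp [hR0]
    set G : ℕ → ℤ := fun i => ∑ j ∈ Icc 1 m, R (m - j) * R' (i + j)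
    calc R (n + m) = ∑ k ∈ Icc 1 n, R (n - k + m) * R' k + G n := by
          rw [hconv _ (by omega), sum_Icc_one_add]
          congr 1
          · refine sum_congr rfl fun k hk => ?_
            rw [show n + m - k = n - k + m by simp only [mem_Icc] at hk; omega]
          · exact sum_congr rfl fun j _ => by rw [Nat.add_sub_add_left]
      _ = ∑ k ∈ Icc 1 n, (R (n - k) * R m + ∑ i ∈ Icc 1 (n - k), R (n - k - i) * G i) * R' k
            + G n := by
          congr 1
          refine sum_congr rfl fun k hk => ?_
          rw [ih _ (by simp only [mem_Icc] at hk; omega)]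
      _ = R n * R m + ∑ i ∈ Icc 1 n, R (n - i) * G i := by
          rw [sum_Icc_conv_renewal hR0 hconv G hn, hconv n hn, sum_mul]
          simp only [add_mul, sum_add_distrib, mul_right_comm _ (R m)]
          ring

end Renewal

theorem stmt14 (R R' : ℕ → ℤ) (hR0 : R 0 = 1)
    (hconv : ∀ n ≥ 1, R n = ∑ i ∈ Finset.Icc 1 n, R (n - i) * R' i) :
    ∀ m ≥ 1, ∀ n ≥ 1, R (n + m) = R n * R m
      + ∑ i ∈ Finset.Icc 1 n, ∑ j ∈ Finset.Icc 1 m, R (n - i) * R (m - j) * R' (i + j) := by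
  intro m _ n _
  simp only [apply_add_eq_mul_add_sum hR0 hconv m n, mul_sum, mul_assoc]
end

section
/- Let R and R̃ be sequences with R(0)=1 satisfying R(n) = Σ_{i=1}^{n} R(n-i)·R̃(i) for all n ≥ 1. Then for all n > k ≥ 0, R(2n) = R(n-k)·R(n+k) + Σ_{i=1}^{n-k} Σ_{j=1}^{n+k} R(n-k-i)·R(n+k-j)·R̃(i+j). -/
/-! A board of length `a + b` is tiled either with a break at the cut `a`, giving `R a * R b`
tilings, or with one unbreakable block straddling the cut, covering `i` cells to its left and `j`
cells to its right. The identity `R (a + b) = R a * R b + (straddling tilings)` follows by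
induction on `a`: moving the cut by one cell changes the straddling count by
`R a * R (b + 1) - R (a + 1) * R b`, which is read off from the convolution relation. -/

open Finset

theorem sum_Icc_one_eq_sum_range_sub {M : Type*} [AddCommMonoid M] (g : ℕ → M) (a : ℕ) :
    ∑ i ∈ Icc 1 a, g i = ∑ i ∈ range a, g (a - i) := by
  apply sum_nbij' (fun i => a - i) (fun i => a - i) <;>
    simp only [mem_Icc, mem_range] <;> intros <;> first | omega | (congr 1; omega)

section Convolution

variable {α : Type*} [CommRing α] {R R' : ℕ → α}

theorem sum_range_mul_sub_eq (hconv : ∀ n ≥ 1, R n = ∑ i ∈ Icc 1 n, R (n - i) * R' i) (m : ℕ) :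
    ∑ i ∈ range m, R i * R' (m + 1 - i) = R (m + 1) - R m * R' 1 := by
  have hrange : R (m + 1) = ∑ i ∈ range (m + 1), R i * R' (m + 1 - i) := by
    rw [hconv (m + 1) m.succ_pos, sum_Icc_one_eq_sum_range_sub]
    refine sum_congr rfl fun i hi => ?_
    rw [Nat.sub_sub_self (mem_range.1 hi).le]
  rw [hrange, sum_range_succ, Nat.add_sub_cancel_left]
  ring

/-- The straddling block has length `(a - i) + (b - j) = a + b - (i + j)`; writing it in the
second form makes the kernel independent of where the cut is, as long as `a + b` is fixed. -/
theorem add_eq_mul_add_sum_range (hR0 : R 0 = 1)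
    (hconv : ∀ n ≥ 1, R n = ∑ i ∈ Icc 1 n, R (n - i) * R' i) (a b : ℕ) :
    R (a + b) = R a * R b +
      ∑ i ∈ range a, ∑ j ∈ range b, R i * R j * R' (a + b - (i + j)) := by
  induction a generalizing b with
  | zero => simp [hR0]
  | succ a ih =>
    have hcut := ih (b + 1)
    rw [show a + 1 + b = a + (b + 1) by omega]
    simp only [sum_range_succ, sum_add_distrib] at hcut ⊢
    have hleft : ∑ j ∈ range b, R a * R j * R' (a + (b + 1) - (a + j))
        = R a * (R (b + 1) - R b * R' 1) := by
      rw [← sum_range_mul_sub_eq hconv, mul_sum]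
      refine sum_congr rfl fun j _ => ?_
      rw [show a + (b + 1) - (a + j) = b + 1 - j by omega]
      ring
    have hright : ∑ i ∈ range a, R i * R b * R' (a + (b + 1) - (i + b))
        = R b * (R (a + 1) - R a * R' 1) := by
      rw [← sum_range_mul_sub_eq hconv, mul_sum]
      refine sum_congr rfl fun i _ => ?_
      rw [show a + (b + 1) - (i + b) = a + 1 - i by omega]
      ring
    linear_combination hcut - hleft + hright

theorem add_eq_mul_add_sum_Icc (hR0 : R 0 = 1)
    (hconv : ∀ n ≥ 1, R n = ∑ i ∈ Icc 1 n, R (n - i) * R' i) (a b : ℕ) :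
    R (a + b) = R a * R b +
      ∑ i ∈ Icc 1 a, ∑ j ∈ Icc 1 b, R (a - i) * R (b - j) * R' (i + j) := by
  rw [add_eq_mul_add_sum_range hR0 hconv, sum_Icc_one_eq_sum_range_sub]
  congr 1
  refine sum_congr rfl fun i hi => ?_
  rw [sum_Icc_one_eq_sum_range_sub]
  refine sum_congr rfl fun j hj => ?_
  have hia := (mem_range.1 hi).le
  have hjb := (mem_range.1 hj).le
  rw [Nat.sub_sub_self hia, Nat.sub_sub_self hjb]
  congr 2
  omega

end Convolution

theorem stmt16 (R R' : ℕ → ℤ) (hR0 : R 0 = 1)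
    (hconv : ∀ n ≥ 1, R n = ∑ i ∈ Finset.Icc 1 n, R (n - i) * R' i) :
    ∀ n k : ℕ, n > k → R (2 * n) = R (n - k) * R (n + k)
      + ∑ i ∈ Finset.Icc 1 (n - k), ∑ j ∈ Finset.Icc 1 (n + k),
          R (n - k - i) * R (n + k - j) * R' (i + j) := by
  intro n k hkn
  rw [show 2 * n = (n - k) + (n + k) by omega]
  exact add_eq_mul_add_sum_Icc hR0 hconv (n - k) (n + k)
end

section
/- Define r: ℕ → ℤ by r(0)=1, r(1)=2, r(2)=7, and r(n)=3·r(n-1)+r(n-2)-r(n-3) for n ≥ 3 (the count of square-and-domino tilings of the Euclidean 2×n board). Define R: ℕ → ℤ by the fourth-order recurrence of Corollary 1 with q=4: R(0)=1, R(1)=f(2), R(2)=7f(0)²+7f(0)f(-1)+2f(-1)², R(3)=22f(0)³+36f(0)²f(-1)+19f(0)f(-1)²+3f(-1)³, and R(n)=2f(1)R(n-1)+(5f(0)²+(-1)³)R(n-2)+2(-1)⁴f(-1)R(n-3)-R(n-4) for n ≥ 4, where f(-1)=0, f(0)=f(1)=1, f(2)=2. Then r(n)=R(n) for all n. -/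
/-!
At `q = 4`, with `f (-1) = 0` and `f 0 = f 1 = 1`, the fourth-order recurrence becomes
`R (n + 4) = 2 R (n + 3) + 4 R (n + 2) - R n`, whose characteristic polynomial
`x⁴ - 2x³ - 4x² + 1 = (x + 1)(x³ - 3x² - x + 1)` is a multiple of that of the third-order one.
Hence `r` solves the fourth-order recurrence too, and two solutions with the same four initial
values coincide.
-/

def quarticRecurrence (α : Type*) [CommRing α] : LinearRecurrence α :=
  ⟨4, ![-1, 0, 4, 2]⟩

lemma quarticRecurrence_isSolution_iff {α : Type*} [CommRing α] (u : ℕ → α) :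
    (quarticRecurrence α).IsSolution u ↔ ∀ n, u (n + 4) = 2 * u (n + 3) + 4 * u (n + 2) - u n := by
  refine forall_congr' fun n => ?_
  change u (n + 4) = ∑ i : Fin 4, ![-1, 0, 4, 2] i * u (n + i) ↔ _
  rw [Fin.sum_univ_four]
  simp only [Matrix.cons_val, Fin.val_zero, Fin.val_one, Fin.val_two]
  constructor <;> intro h <;> rw [h] <;> norm_num <;> ring

lemma quartic_of_cubic {α : Type*} [CommRing α] {u : ℕ → α}
    (hu : ∀ n, u (n + 3) = 3 * u (n + 2) + u (n + 1) - u n) (n : ℕ) :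
    u (n + 4) = 2 * u (n + 3) + 4 * u (n + 2) - u n := by
  linear_combination hu (n + 1) + hu n

lemma LinearRecurrence.eq_of_isSolution_of_eq_init {α : Type*} [CommSemiring α]
    {E : LinearRecurrence α} {u v : ℕ → α} (hu : E.IsSolution u) (hv : E.IsSolution v)
    (hinit : ∀ n < E.order, u n = v n) : u = v := by
  rw [E.eq_mk_of_is_sol_of_eq_init' hu (init := fun i => u i) fun _ => rfl,
    E.eq_mk_of_is_sol_of_eq_init' hv (init := fun i => u i) fun i => (hinit i i.2).symm]

theorem stmt18 (f : ℤ → ℤ) (hfm1 : f (-1) = 0) (hf0 : f 0 = 1) (hf1 : f 1 = 1)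
    (hf2 : f 2 = 2)
    (r : ℕ → ℤ) (hr0 : r 0 = 1) (hr1 : r 1 = 2) (hr2 : r 2 = 7)
    (hr : ∀ n ≥ 3, r n = 3 * r (n - 1) + r (n - 2) - r (n - 3))
    (R : ℕ → ℤ) (hR0 : R 0 = 1) (hR1 : R 1 = f 2)
    (hR2 : R 2 = 7 * (f 0) ^ 2 + 7 * f 0 * f (-1) + 2 * (f (-1)) ^ 2)
    (hR3 : R 3 = 22 * (f 0) ^ 3 + 36 * (f 0) ^ 2 * f (-1) + 19 * f 0 * (f (-1)) ^ 2
      + 3 * (f (-1)) ^ 3)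
    (hR : ∀ n ≥ 4, R n = 2 * f 1 * R (n - 1) + (5 * (f 0) ^ 2 + (-1) ^ 3) * R (n - 2)
      + 2 * (-1) ^ 4 * f (-1) * R (n - 3) - R (n - 4)) :
    ∀ n, r n = R n := by
  have hr_cubic (n : ℕ) : r (n + 3) = 3 * r (n + 2) + r (n + 1) - r n := hr (n + 3) (by omega)
  have hR_quartic (n : ℕ) : R (n + 4) = 2 * R (n + 3) + 4 * R (n + 2) - R n := by
    simpa [hfm1, hf0, hf1] using hR (n + 4) (by omega)
  have hr3 : r 3 = 22 := by simpa [hr0, hr1, hr2] using hr_cubic 0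
  refine congrFun (LinearRecurrence.eq_of_isSolution_of_eq_init (E := quarticRecurrence ℤ)
    ((quarticRecurrence_isSolution_iff r).2 (quartic_of_cubic hr_cubic))
    ((quarticRecurrence_isSolution_iff R).2 hR_quartic) fun n hn => ?_)
  change n < 4 at hn
  interval_cases n <;> simp [hr0, hr1, hr2, hr3, hR0, hR1, hR2, hR3, hfm1, hf0, hf2]
end

section
/- Let a, b be integers and define R by R(0)=1, R(1)=a²+b, R(2)=a⁴+4a²b+2b², R(3) given by the q=4 case of Theorem 1, and R(n)=α·R(n-1)+β·R(n-2)+γ·R(n-3)-b⁴·R(n-4) for n ≥ 4 where α=a²+b (=α(4)), β=2b(a²+b) (=β(4)), γ=b²(a²-b) (=γ(4)). Then R also satisfies the Katz–Stenson third-order recurrence R(n)=(a²+2b)·R(n-1)+a²b·R(n-2)-b³·R(n-3) for all n ≥ 3. -/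
/-!
The quartic recurrence is the cubic one at `n` plus `b` times it at `n - 1`, so the defect `e` of
the cubic recurrence satisfies `e (m + 1) = -b · e m`. As `e` vanishes at the start by the choice
of `R 3`, it vanishes identically.
-/

theorem eq_zero_of_eq_zero_of_succ_eq_mul {M : Type*} [MulZeroClass M] {e : ℕ → M} {c : M}
    (h0 : e 0 = 0) (hsucc : ∀ n, e (n + 1) = c * e n) (n : ℕ) : e n = 0 := by
  induction n with
  | zero => exact h0
  | succ n ih => rw [hsucc, ih, mul_zero]

theorem stmt19_general (a b : ℤ) (R : ℕ → ℤ)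
    (hR3 : R 3 = (a ^ 2 + 2 * b) * R 2 + a ^ 2 * b * R 1 - b ^ 3 * R 0)
    (hR : ∀ n ≥ 4, R n = (a ^ 2 + b) * R (n - 1) + 2 * b * (a ^ 2 + b) * R (n - 2)
      + b ^ 2 * (a ^ 2 - b) * R (n - 3) - b ^ 4 * R (n - 4)) :
    ∀ n ≥ 3, R n = (a ^ 2 + 2 * b) * R (n - 1) + a ^ 2 * b * R (n - 2) - b ^ 3 * R (n - 3) := by
  let e : ℕ → ℤ := fun m =>
    R (m + 3) - ((a ^ 2 + 2 * b) * R (m + 2) + a ^ 2 * b * R (m + 1) - b ^ 3 * R m)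
  have e_zero : e 0 = 0 := sub_eq_zero.mpr hR3
  have e_succ (m : ℕ) : e (m + 1) = -b * e m := by
    have quartic : R (m + 4) = (a ^ 2 + b) * R (m + 3) + 2 * b * (a ^ 2 + b) * R (m + 2)
        + b ^ 2 * (a ^ 2 - b) * R (m + 1) - b ^ 4 * R m := hR (m + 4) (by omega)
    linear_combination quartic
  intro n hn
  obtain ⟨m, rfl⟩ := Nat.exists_eq_add_of_le' hn
  exact sub_eq_zero.mp (eq_zero_of_eq_zero_of_succ_eq_mul e_zero e_succ m)

theorem stmt19 (a b : ℤ) (R : ℕ → ℤ)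
    (hR0 : R 0 = 1) (hR1 : R 1 = a ^ 2 + b) (hR2 : R 2 = a ^ 4 + 4 * a ^ 2 * b + 2 * b ^ 2)
    (hR3 : R 3 = (a ^ 2 + 2 * b) * R 2 + a ^ 2 * b * R 1 - b ^ 3 * R 0)
    (hR : ∀ n ≥ 4, R n = (a ^ 2 + b) * R (n - 1) + 2 * b * (a ^ 2 + b) * R (n - 2)
      + b ^ 2 * (a ^ 2 - b) * R (n - 3) - b ^ 4 * R (n - 4)) :
    ∀ n ≥ 3, R n = (a ^ 2 + 2 * b) * R (n - 1) + a ^ 2 * b * R (n - 2) - b ^ 3 * R (n - 3) :=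
  stmt19_general a b R hR3 hR
end
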